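/- arXiv:2211.05619 — 3 statements merged into one kernel-verified Lean document; each statement's English description precedes it below -/
import Mathlib

section
/- Let G be a connected graph with minimum degree δ. If G contains two adjacent vertices each of degree δ, then the generalized 3-connectivity satisfies κ₃(G) ≤ δ − 1. -/
open SimpleGraph

/-- A signed permutation of `{1,…,n}`: a sequence of integers whose absolute
values form a permutation of `{1,…,n}`. -/
def SignedPerm (n : ℕ) : Type :=
  {x : Fin n → ℤ // (∀ i, 1 ≤ |x i| ∧ |x i| ≤ (n : ℤ)) ∧
    Function.Injective (fun i => |x i|)}

/-- `prefixRevRel n i x y` means `y = x^i`, the `i`-th signed prefix reversal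
of `x` (for `1 ≤ i ≤ n`). -/
def prefixRevRel (n i : ℕ) (x y : SignedPerm n) : Prop :=
  ∃ _h1 : 1 ≤ i, ∃ _h2 : i ≤ n, ∀ j : Fin n,
    (∀ _hj : (j : ℕ) < i, y.val j = - x.val ⟨i - 1 - (j : ℕ), by omega⟩) ∧
    ((i ≤ (j : ℕ)) → y.val j = x.val j)

/-- The burnt pancake graph `BP_n`. -/
def burntPancake (n : ℕ) : SimpleGraph (SignedPerm n) where
  Adj x y := x ≠ y ∧ ∃ i : ℕ, prefixRevRel n i x y ∨ prefixRevRel n i y x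
  symm := by
    constructor
    rintro x y ⟨hne, i, h⟩
    exact ⟨hne.symm, i, h.symm⟩
  loopless := by
    constructor
    rintro x ⟨hne, -⟩
    exact hne rfl

/-- The last entry of a signed permutation; the cluster `BP_n^j` consists of
the vertices with last entry `j`. -/
def lastEntry {n : ℕ} (hn : 0 < n) (x : SignedPerm n) : ℤ :=
  x.val ⟨n - 1, by omega⟩

/-- `y` is the out-neighbour of `x`, i.e. `y = x^n`. -/
def isOutNbr (n : ℕ) (x y : SignedPerm n) : Prop := prefixRevRel n n x y

/-- `T` is a family of `r` pairwise internally edge disjoint `S`-trees in `G`. -/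
def InternallyEdgeDisjointSTrees {V : Type*} (G : SimpleGraph V) (S : Set V)
    {r : ℕ} (T : Fin r → G.Subgraph) : Prop :=
  (∀ i, (T i).coe.IsTree ∧ S ⊆ (T i).verts) ∧
  ∀ i j, i ≠ j → (T i).verts ∩ (T j).verts = S ∧ (T i).edgeSet ∩ (T j).edgeSet = ∅

/-- `κ_G(S)`: the maximum number of pairwise internally edge disjoint `S`-trees. -/
noncomputable def treeConn {V : Type*} (G : SimpleGraph V) (S : Set V) : ℕ :=
  sSup {r : ℕ | ∃ T : Fin r → G.Subgraph, InternallyEdgeDisjointSTrees G S T}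

/-- The generalized `3`-connectivity `κ₃(G)`. -/
noncomputable def gconn3 {V : Type*} (G : SimpleGraph V) : ℕ :=
  sInf (treeConn G '' {S : Set V | S.ncard = 3})

/-- The connectivity `κ(G)`: the minimum cardinality of a set of vertices whose
deletion disconnects the graph or leaves fewer than two vertices. -/
noncomputable def vconn {V : Type*} (G : SimpleGraph V) : ℕ :=
  sInf {k : ℕ | ∃ U : Set V, U.Finite ∧ U.ncard = k ∧
    (¬ (G.induce Uᶜ).Connected ∨ Uᶜ.Subsingleton)}

/-!
Let `w` be a third vertex and `S = {u, v, w}`. An `S`-tree is connected and contains `w`, so it has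
an edge entering `{u, v}` from outside; that edge misses one of `u`, `v`, and the tree also has an
edge at that vertex. So each `S`-tree uses two edges meeting `{u, v}`. Edge-disjoint trees use
different ones, and only `δ + δ - 1` edges meet `{u, v}`, so `2 κ(S) ≤ 2δ - 1`.
-/

open Finset

theorem Finset.card_mul_le_card_biUnion {ι α : Type*} [DecidableEq α] {s : Finset ι}
    {f : ι → Finset α} {n : ℕ} (hs : (s : Set ι).PairwiseDisjoint f) (hf : ∀ i ∈ s, n ≤ #(f i)) :
    #s * n ≤ #(s.biUnion f) := by
  rw [card_biUnion hs, ← smul_eq_mul, ← sum_const]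
  exact sum_le_sum hf

namespace SimpleGraph

variable {V : Type*} {G : SimpleGraph V}

theorem Subgraph.Preconnected.exists_adj_notMem_mem {H : G.Subgraph} (hH : H.Preconnected)
    {s : Set V} {a b : V} (ha : a ∈ H.verts) (hb : b ∈ H.verts) (has : a ∉ s) (hbs : b ∈ s) :
    ∃ x y, H.Adj x y ∧ x ∉ s ∧ y ∈ s := by
  obtain ⟨p⟩ := hH ⟨a, ha⟩ ⟨b, hb⟩
  obtain ⟨d, -, hx, hy⟩ := p.exists_boundary_dart {z | z.val ∉ s} has (by simpa using hbs)
  exact ⟨_, _, d.adj, hx, by simpa using hy⟩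

theorem Subgraph.Preconnected.exists_adj_of_ne {H : G.Subgraph} (hH : H.Preconnected)
    {a b : V} (ha : a ∈ H.verts) (hb : b ∈ H.verts) (hab : a ≠ b) : ∃ x, x ≠ b ∧ H.Adj x b := by
  obtain ⟨x, y, hxy, hx, rfl⟩ := hH.exists_adj_notMem_mem ha hb (s := {b}) hab rfl
  exact ⟨x, hx, hxy⟩

theorem Subgraph.Preconnected.exists_two_edges_incident_to_pair {H : G.Subgraph}
    (hH : H.Preconnected) {u v w : V} (hu : u ∈ H.verts) (hv : v ∈ H.verts) (hw : w ∈ H.verts)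
    (huv : u ≠ v) (hwu : w ≠ u) (hwv : w ≠ v) :
    ∃ e₁ ∈ H.edgeSet, ∃ e₂ ∈ H.edgeSet, e₁ ≠ e₂ ∧ (u ∈ e₁ ∨ v ∈ e₁) ∧ (u ∈ e₂ ∨ v ∈ e₂) := by
  have two_edges : ∀ {a b x}, b ∈ H.verts → a ≠ b → x ≠ b → H.Adj x a →
      ∃ e₁ ∈ H.edgeSet, ∃ e₂ ∈ H.edgeSet, e₁ ≠ e₂ ∧ a ∈ e₁ ∧ b ∈ e₂ := by
    intro a b x hb hab hxb hxa
    obtain ⟨y, -, hyb⟩ := hH.exists_adj_of_ne hxa.snd_mem hb hab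
    refine ⟨s(x, a), hxa, s(y, b), hyb, fun h => ?_, Sym2.mem_mk_right _ _, Sym2.mem_mk_right _ _⟩
    have : b ∈ s(x, a) := h ▸ Sym2.mem_mk_right _ _
    rcases Sym2.mem_iff.mp this with h | h
    exacts [hxb h.symm, hab h.symm]
  obtain ⟨x, y, hxy, hx, hy⟩ := hH.exists_adj_notMem_mem (s := {u, v}) hw hu (by simp [hwu, hwv])
    (by simp)
  simp only [Set.mem_insert_iff, Set.mem_singleton_iff, not_or] at hx hy
  rcases hy with rfl | rfl
  · obtain ⟨e₁, h₁, e₂, h₂, hne, hy₁, hv₂⟩ := two_edges hv huv hx.2 hxy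
    exact ⟨e₁, h₁, e₂, h₂, hne, .inl hy₁, .inr hv₂⟩
  · obtain ⟨e₁, h₁, e₂, h₂, hne, hy₁, hu₂⟩ := two_edges hu huv.symm hx.1 hxy
    exact ⟨e₁, h₁, e₂, h₂, hne, .inr hy₁, .inl hu₂⟩

theorem card_incidenceFinset_union_of_adj [DecidableEq V] [G.LocallyFinite] {u v : V}
    (huv : G.Adj u v) :
    #(G.incidenceFinset u ∪ G.incidenceFinset v) = G.degree u + G.degree v - 1 := by
  have hinter : G.incidenceFinset u ∩ G.incidenceFinset v = {s(u, v)} := by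
    ext e
    simp only [mem_inter, mem_incidenceFinset, ← Set.mem_inter_iff,
      G.incidenceSet_inter_incidenceSet_of_adj huv, Set.mem_singleton_iff, mem_singleton]
  have := card_union_add_card_inter (G.incidenceFinset u) (G.incidenceFinset v)
  rw [hinter, card_singleton, card_incidenceFinset_eq_degree, card_incidenceFinset_eq_degree]
    at this
  omega

theorem two_mul_card_le_degree_add_degree_sub_one_of_adj [G.LocallyFinite] {ι : Type*}
    [Fintype ι] {H : ι → G.Subgraph} (hH : ∀ i, (H i).Preconnected)
    (hdisj : Pairwise fun i j => Disjoint (H i).edgeSet (H j).edgeSet) {u v w : V}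
    (hS : ∀ i, {u, v, w} ⊆ (H i).verts) (huv : G.Adj u v) (hwu : w ≠ u) (hwv : w ≠ v) :
    2 * Fintype.card ι ≤ G.degree u + G.degree v - 1 := by
  classical
  set I := G.incidenceFinset u ∪ G.incidenceFinset v
  have mem_I : ∀ i e, e ∈ (H i).edgeSet → u ∈ e ∨ v ∈ e → e ∈ I := fun i e he hu =>
    by simpa [I, incidenceSet, (H i).edgeSet_subset he] using hu
  let F i := {e ∈ I | e ∈ (H i).edgeSet}
  have hF : ((univ : Finset ι) : Set ι).PairwiseDisjoint F := fun i _ j _ hij =>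
    Finset.disjoint_left.mpr fun _ hi hj =>
      (hdisj hij).ne_of_mem (mem_filter.mp hi).2 (mem_filter.mp hj).2 rfl
  have two_le : ∀ i ∈ univ, 2 ≤ #(F i) := fun i _ => by
    have hV := hS i
    simp only [Set.insert_subset_iff, Set.singleton_subset_iff] at hV
    obtain ⟨e₁, h₁, e₂, h₂, hne, hi₁, hi₂⟩ :=
      (hH i).exists_two_edges_incident_to_pair hV.1 hV.2.1 hV.2.2 huv.ne hwu hwv
    exact one_lt_card.mpr ⟨e₁, mem_filter.mpr ⟨mem_I i e₁ h₁ hi₁, h₁⟩,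
      e₂, mem_filter.mpr ⟨mem_I i e₂ h₂ hi₂, h₂⟩, hne⟩
  calc 2 * Fintype.card ι = #(univ : Finset ι) * 2 := by rw [card_univ, mul_comm]
    _ ≤ #(univ.biUnion F) := card_mul_le_card_biUnion hF two_le
    _ ≤ #I := card_le_card (biUnion_subset.mpr fun i _ => filter_subset _ _)
    _ = G.degree u + G.degree v - 1 := card_incidenceFinset_union_of_adj huv

theorem treeConn_le_of_adj [G.LocallyFinite] {u v w : V} (huv : G.Adj u v) (hwu : w ≠ u)
    (hwv : w ≠ v) : treeConn G {u, v, w} ≤ (G.degree u + G.degree v - 1) / 2 := by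
  refine csSup_le' fun r ⟨T, hT, hdisj⟩ => ?_
  rw [Nat.le_div_iff_mul_le two_pos, mul_comm]
  simpa using two_mul_card_le_degree_add_degree_sub_one_of_adj
    (fun i => ⟨(hT i).1.connected.preconnected⟩)
    (fun i j hij => Set.disjoint_iff_inter_eq_empty.mpr (hdisj i j hij).2)
    (fun i => (hT i).2) huv hwu hwv

-- With fewer than three vertices `κ₃(G)` is the junk value `sInf ∅ = 0`.
theorem gconn3_eq_zero_of_forall_eq_or_eq {u v : V} (h : ∀ w, w = u ∨ w = v) :
    gconn3 G = 0 := by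
  have : {S : Set V | S.ncard = 3} = ∅ := Set.eq_empty_of_forall_notMem fun S hS => by
    have := (Set.ncard_le_ncard (s := S) (t := {u, v}) fun w _ => h w).trans
      (Set.ncard_insert_le u {v})
    simp_all
  simp [gconn3, this]

end SimpleGraph

open SimpleGraph

theorem gconn3_le_minDegree_sub_one_general {V : Type*} [Fintype V]
    (G : SimpleGraph V) [DecidableRel G.Adj]
    (u v : V) (huv : G.Adj u v)
    (hu : G.degree u = G.minDegree) (hv : G.degree v = G.minDegree) :
    gconn3 G ≤ G.minDegree - 1 := by
  by_cases hw : ∃ w, w ≠ u ∧ w ≠ v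
  · obtain ⟨w, hwu, hwv⟩ := hw
    have hS : ({u, v, w} : Set V).ncard = 3 :=
      Set.ncard_eq_three.mpr ⟨u, v, w, huv.ne, hwu.symm, hwv.symm, rfl⟩
    calc gconn3 G ≤ treeConn G {u, v, w} := Nat.sInf_le ⟨_, hS, rfl⟩
      _ ≤ (G.degree u + G.degree v - 1) / 2 := treeConn_le_of_adj huv hwu hwv
      _ = G.minDegree - 1 := by rw [hu, hv]; omega
  · push Not at hw
    rw [gconn3_eq_zero_of_forall_eq_or_eq fun w => or_iff_not_imp_left.mpr (hw w)]
    exact Nat.zero_le _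

/-- If a connected graph `G` has two adjacent vertices of minimum degree `δ`,
then `κ₃(G) ≤ δ - 1`. -/
theorem gconn3_le_minDegree_sub_one {V : Type*} [Fintype V]
    (G : SimpleGraph V) [DecidableRel G.Adj] (hG : G.Connected)
    (u v : V) (huv : G.Adj u v)
    (hu : G.degree u = G.minDegree) (hv : G.degree v = G.minDegree) :
    gconn3 G ≤ G.minDegree - 1 :=
  gconn3_le_minDegree_sub_one_general G u v huv hu hv
end

section
/- For every integer n ≥ 3, the subgraph of the godan graph EA_n induced by the alternating group A_n is isomorphic to the alternating group network AN_n, and the subgraph of EA_n induced by the set S_n ∖ A_n of odd permutations is also isomorphic to AN_n. -/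
open SimpleGraph Equiv

/-- The (undirected) Cayley graph of a group with connection set `Ω`. -/
def cayley {G : Type*} [Group G] (Ω : Set G) : SimpleGraph G where
  Adj u v := u ≠ v ∧ ∃ s ∈ Ω, u = v * s ∨ v = u * s
  symm := by
    constructor
    rintro u v ⟨hne, s, hs, h⟩
    exact ⟨hne.symm, s, hs, h.symm⟩
  loopless := by constructor; rintro u ⟨hne, -⟩; exact hne rfl

/-- The Cayley graph on a subgroup `H`, with connection set `Ω` given as a set
of elements of the ambient group. -/
def subCayley {G : Type*} [Group G] (H : Subgroup G) (Ω : Set G) :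
    SimpleGraph H where
  Adj u v := u ≠ v ∧ ∃ s ∈ Ω, (u : G) = v * s ∨ (v : G) = u * s
  symm := by
    constructor
    rintro u v ⟨hne, s, hs, h⟩
    exact ⟨hne.symm, s, hs, h.symm⟩
  loopless := by constructor; rintro u ⟨hne, -⟩; exact hne rfl

/-- The 3-cycle `(1 2 3)` (on `{1,…,n}`, written 0-indexed on `Fin n`). -/
def c123 (n : ℕ) (hn : 3 ≤ n) : Equiv.Perm (Fin n) :=
  Equiv.swap ⟨0, by omega⟩ ⟨2, by omega⟩ * Equiv.swap ⟨0, by omega⟩ ⟨1, by omega⟩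

/-- The connection set `Ω = {(123), (132)} ∪ {(12)(3i) : 4 ≤ i ≤ n}` of the
alternating group network. -/
def anGens (n : ℕ) (hn : 3 ≤ n) : Set (Equiv.Perm (Fin n)) :=
  {c123 n hn, (c123 n hn)⁻¹} ∪
  {s | ∃ i : ℕ, ∃ _h1 : 4 ≤ i, ∃ _h2 : i ≤ n,
    s = Equiv.swap ⟨0, by omega⟩ ⟨1, by omega⟩ *
        Equiv.swap ⟨2, by omega⟩ ⟨i - 1, by omega⟩}

/-- The connection set `Ω* = {(12), (123), (132)} ∪ {(12)(3i) : 4 ≤ i ≤ n}` of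
the godan graph. -/
def godanGens (n : ℕ) (hn : 3 ≤ n) : Set (Equiv.Perm (Fin n)) :=
  {Equiv.swap ⟨0, by omega⟩ ⟨1, by omega⟩} ∪ anGens n hn

/-- The alternating group network `AN_n = Cay(A_n, Ω)`. -/
def altNetwork (n : ℕ) (hn : 3 ≤ n) : SimpleGraph (alternatingGroup (Fin n)) :=
  subCayley (alternatingGroup (Fin n)) (anGens n hn)

/-- The godan graph `EA_n = Cay(S_n, Ω*)`. -/
def godan (n : ℕ) (hn : 3 ≤ n) : SimpleGraph (Equiv.Perm (Fin n)) :=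
  cayley (godanGens n hn)

section Cayley

variable {G : Type*} [Group G]

def cayleyMulLeftIso (Ω : Set G) (g : G) : cayley Ω ≃g cayley Ω where
  toEquiv := Equiv.mulLeft g
  map_rel_iff' {u v} := by
    simp only [cayley, Equiv.coe_mulLeft, ne_eq, mul_right_inj, mul_assoc]

/-- Inside a subgroup `H`, only the connection elements lying in `H` can join two vertices:
`u = v * s` with `u, v ∈ H` forces `s ∈ H`. -/
def cayleyInduceIsoSubCayley (H : Subgroup G) {Ω Ω' : Set G} (hΩ : Ω ∩ H = Ω') :
    (cayley Ω).induce (H : Set G) ≃g subCayley H Ω' where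
  toEquiv := Equiv.refl _
  map_rel_iff' {u v} := by
    subst hΩ
    simp only [cayley, subCayley, Equiv.refl_apply, comap_adj, Function.Embedding.coe_subtype,
      ne_eq, Subtype.ext_iff]
    refine and_congr_right fun _ =>
      ⟨fun ⟨s, hs, h⟩ => ⟨s, hs.1, h⟩, fun ⟨s, hs, h⟩ => ⟨s, ⟨hs, ?_⟩, h⟩⟩
    rcases h with h | h
    · exact (H.mul_mem_cancel_left v.2).mp (h ▸ u.2)
    · exact (H.mul_mem_cancel_left u.2).mp (h ▸ v.2)

theorem Subgroup.mul_mem_iff_notMem_of_index_two {H : Subgroup G} (h : H.index = 2) {g : G}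
    (hg : g ∉ H) (x : G) : g * x ∈ H ↔ x ∉ H := by
  rw [Subgroup.mul_mem_iff_of_index_two h]
  tauto

/-- The complement of an index-two subgroup is a coset, which left multiplication moves onto
the subgroup. -/
def cayleyInduceComplIso {H : Subgroup G} (h : H.index = 2) {g : G} (hg : g ∉ H) (Ω : Set G) :
    (cayley Ω).induce (H : Set G)ᶜ ≃g (cayley Ω).induce (H : Set G) :=
  (cayleyMulLeftIso Ω g).induce ((Equiv.mulLeft g).bijOn (H.mul_mem_iff_notMem_of_index_two h hg))

end Cayley

lemma swap_zero_one_notMem_alternatingGroup (n : ℕ) (hn : 3 ≤ n) :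
    swap (⟨0, by omega⟩ : Fin n) ⟨1, by omega⟩ ∉ alternatingGroup (Fin n) := by
  rw [Perm.mem_alternatingGroup, Perm.sign_swap (by simp [Fin.ext_iff])]
  decide

lemma anGens_subset_alternatingGroup (n : ℕ) (hn : 3 ≤ n) :
    anGens n hn ⊆ alternatingGroup (Fin n) := by
  have hc : c123 n hn ∈ alternatingGroup (Fin n) :=
    Perm.mul_mem_alternatingGroup_of_isSwap ⟨_, _, by simp [Fin.ext_iff], rfl⟩
      ⟨_, _, by simp [Fin.ext_iff], rfl⟩
  rintro s ((rfl | rfl) | ⟨i, hi, hin, rfl⟩)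
  · exact hc
  · exact inv_mem hc
  · exact Perm.mul_mem_alternatingGroup_of_isSwap ⟨_, _, by simp [Fin.ext_iff], rfl⟩
      ⟨_, _, by simp [Fin.ext_iff]; omega, rfl⟩

lemma godanGens_inter_alternatingGroup (n : ℕ) (hn : 3 ≤ n) :
    godanGens n hn ∩ alternatingGroup (Fin n) = anGens n hn := by
  rw [godanGens, Set.union_inter_distrib_right, Set.inter_eq_left.mpr
    (anGens_subset_alternatingGroup n hn), Set.singleton_inter_eq_empty.mpr
    (swap_zero_one_notMem_alternatingGroup n hn), Set.empty_union]

/-- For `n ≥ 3`, the subgraph of the godan graph `EA_n` induced by the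
alternating group `A_n` is isomorphic to `AN_n`, and so is the subgraph
induced by the odd permutations `S_n ∖ A_n`. -/
theorem godan_induced_iso_altNetwork (n : ℕ) (hn : 3 ≤ n) :
    Nonempty ((godan n hn).induce
        ((alternatingGroup (Fin n) : Set (Equiv.Perm (Fin n)))) ≃g
      altNetwork n hn) ∧
    Nonempty ((godan n hn).induce
        ((alternatingGroup (Fin n) : Set (Equiv.Perm (Fin n)))ᶜ) ≃g
      altNetwork n hn) := by
  have : Nontrivial (Fin n) := Fin.nontrivial_iff_two_le.mpr (by omega)
  let toAN := cayleyInduceIsoSubCayley _ (godanGens_inter_alternatingGroup n hn)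
  exact ⟨⟨toAN⟩, ⟨toAN.comp (cayleyInduceComplIso alternatingGroup.index_eq_two
    (swap_zero_one_notMem_alternatingGroup n hn) _)⟩⟩
end

section
/- For every integer n ≥ 3, the connectivity of the godan graph satisfies κ(EA_n) = n. -/
open SimpleGraph Equiv

/-!
Let `H m ≤ S_n` be the group of permutations fixing every position `≥ m` (positions are
0-indexed, so `H m ≅ S_m`). By induction on `m ≥ 3`, deleting fewer than `m` vertices of `H m`
leaves the rest of `H m` connected in `EA_n`. The graph `EA_n` restricted to `H 3` is a prism:
the 3-cycles join the even permutations into a triangle and the odd ones into another, and `(12)`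
matches the two triangles. For the step, `H (m + 1)` splits, according to the value at
position `m`, into `m + 1` left cosets of `H m`; right multiplication by `(12)(3, m+1)` is a
perfect matching between different cosets that joins any two of them by at least two edges, and
a counting argument shows that deleting `m` vertices cannot disconnect such a configuration.
For `m = n` this gives `κ(EA_n) ≥ n`, while the `n` neighbours of the identity separate it
from `(13)`.
-/

theorem ENat.lt_two_mul_mul_of_le_add {a b : ℕ∞} {m : ℕ} (hm : 3 ≤ m) (ha : a ≠ 0) (hb : b ≠ 0)
    (hab : (m : ℕ∞) ≤ a + b) : (m : ℕ∞) < 2 * a * b := by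
  induction a using ENat.recTopCoe with
  | top => simp [ENat.mul_top, ENat.top_mul, hb]
  | coe a =>
    induction b using ENat.recTopCoe with
    | top => simp [ENat.mul_top, ha]
    | coe b =>
      norm_cast at *
      nlinarith [Nat.pos_of_ne_zero ha, Nat.pos_of_ne_zero hb]

namespace SimpleGraph

variable {V W ι : Type*} {G : SimpleGraph V}

/-- Unlike `vconn`, this imposes no lower bound on the size of `s`. -/
def IsVertexConnectedOn (G : SimpleGraph V) (k : ℕ) (s : Set V) : Prop :=
  ∀ ⦃t : Set V⦄, t.encard < k → (G.induce (s \ t)).Preconnected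

theorem IsVertexConnectedOn.image {G' : SimpleGraph W} (φ : G ≃g G') {k : ℕ} {s : Set V}
    (h : G.IsVertexConnectedOn k s) : G'.IsVertexConnectedOn k (φ '' s) := by
  intro t ht
  have hpre : (φ ⁻¹' t).encard < k := by
    rwa [Set.encard_preimage_of_injective_subset_range φ.injective (by simp)]
  refine (h hpre).map (induceHom φ.toHom fun x hx => ⟨Set.mem_image_of_mem φ hx.1, hx.2⟩) ?_
  rintro ⟨_, ⟨x, hx, rfl⟩, hxt⟩
  exact ⟨⟨x, hx, hxt⟩, rfl⟩

theorem induce_preconnected_of_exists_adj {w : Set V}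
    (h : ∀ X ⊆ w, X.Nonempty → (w \ X).Nonempty → ∃ x ∈ X, ∃ y ∈ w \ X, G.Adj x y) :
    (G.induce w).Preconnected := by
  intro u v
  by_contra huv
  obtain ⟨x, ⟨hxw, hux⟩, y, ⟨hyw, hy⟩, hxy⟩ :=
    h {x | ∃ hx : x ∈ w, (G.induce w).Reachable u ⟨x, hx⟩} (fun x hx => hx.1)
      ⟨u, u.2, .rfl⟩ ⟨v, v.2, fun ⟨_, h⟩ => huv h⟩
  exact hy ⟨hyw, hux.trans (Adj.reachable (G := G.induce w) (u := ⟨x, hxw⟩) (v := ⟨y, hyw⟩) hxy)⟩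

theorem subset_of_induce_preconnected {a w X : Set V} (ha : (G.induce a).Preconnected)
    (haw : a ⊆ w) (hX : ∀ x ∈ X, ∀ y ∈ w \ X, ¬ G.Adj x y) (haX : (a ∩ X).Nonempty) :
    a ⊆ X := by
  obtain ⟨x, hxa, hxX⟩ := haX
  intro y hya
  obtain ⟨p⟩ := ha ⟨x, hxa⟩ ⟨y, hya⟩
  suffices ∀ {u v : a}, (G.induce a).Walk u v → (u : V) ∈ X → (v : V) ∈ X from this p hxX
  intro u v p
  induction p with
  | nil => exact id
  | cons hadj _ ih =>
    exact fun hu => ih (by_contra fun h => hX _ hu _ ⟨haw (Subtype.prop _), h⟩ hadj)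

theorem vconn_le_ncard {U : Set V} (hU : U.Finite)
    (h : ¬ (G.induce Uᶜ).Connected ∨ Uᶜ.Subsingleton) : vconn G ≤ U.ncard :=
  Nat.sInf_le ⟨U, hU, rfl, h⟩

theorem le_vconn [Finite V] {k : ℕ} (h : G.IsVertexConnectedOn k Set.univ) (hk : k < Nat.card V) :
    k ≤ vconn G := by
  refine le_csInf ⟨_, Set.univ, Set.toFinite _, rfl, Or.inr (by simp)⟩ ?_
  rintro _ ⟨U, hU, rfl, hdisc⟩
  by_contra! hUk
  have hpre : (G.induce Uᶜ).Preconnected := by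
    rw [Set.compl_eq_univ_sdiff]
    exact h (by rw [← hU.cast_ncard_eq]; exact_mod_cast hUk)
  have hnt : Uᶜ.Nontrivial := by
    have := Set.ncard_add_ncard_compl U
    rw [← Set.one_lt_ncard_iff_nontrivial]
    omega
  have : Nonempty ↥Uᶜ := hnt.nonempty.to_subtype
  exact hdisc.elim (· ⟨hpre⟩) hnt.not_subsingleton

theorem not_connected_induce_compl_neighborSet {v w : V} (hwv : w ≠ v) (hvw : ¬ G.Adj v w) :
    ¬ (G.induce (G.neighborSet v)ᶜ).Connected := by
  intro hconn
  obtain ⟨p⟩ := hconn.preconnected ⟨v, G.irrefl⟩ ⟨w, hvw⟩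
  cases p with
  | nil => exact hwv rfl
  | @cons _ u _ hadj _ => exact u.2 hadj

structure MatchedPartition (G : SimpleGraph V) (s : Set V) (ι : Type*) where
  label : V → ι
  partner : V → V
  partner_mem : ∀ x ∈ s, partner x ∈ s
  partner_partner : ∀ x ∈ s, partner (partner x) = x
  adj_partner : ∀ x ∈ s, G.Adj x (partner x)
  label_partner_ne : ∀ x ∈ s, label (partner x) ≠ label x
  nontrivial_cross : ∀ k ∈ label '' s, ∀ l ∈ label '' s, k ≠ l →
    {x ∈ s | label x = k ∧ label (partner x) = l}.Nontrivial

namespace MatchedPartition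

variable {s : Set V} (P : G.MatchedPartition s ι)

def block (k : ι) : Set V := {x ∈ s | P.label x = k}

def cross (K L : Set ι) : Set V := {x ∈ s | P.label x ∈ K ∧ P.label (P.partner x) ∈ L}

def lightLabels (t : Set V) (m : ℕ) : Set ι := {k ∈ P.label '' s | (t ∩ P.block k).encard < m}

theorem two_mul_encard_mul_le_encard_cross {K L : Set ι} (hK : K ⊆ P.label '' s)
    (hL : L ⊆ P.label '' s) (hKL : Disjoint K L) :
    2 * K.encard * L.encard ≤ (P.cross K L).encard := by
  rcases K.eq_empty_or_nonempty with rfl | ⟨k, hk⟩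
  · simp
  have : Nonempty V := let ⟨v, _⟩ := hK hk; ⟨v⟩
  choose! x hx y hy hxy using fun k l (hk : k ∈ K) (hl : l ∈ L) =>
    P.nontrivial_cross k (hK hk) l (hL hl) (hKL.ne_of_mem hk hl)
  let f : ι × ι × Bool → V := fun p => cond p.2.2 (x p.1 p.2.1) (y p.1 p.2.1)
  have hf : ∀ k ∈ K, ∀ l ∈ L, ∀ b,
      f (k, l, b) ∈ s ∧ P.label (f (k, l, b)) = k ∧ P.label (P.partner (f (k, l, b))) = l := by
    intro k hk l hl b
    cases b
    exacts [hy k l hk hl, hx k l hk hl]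
  have hinj : Set.InjOn f (K ×ˢ L ×ˢ Set.univ) := by
    rintro ⟨k, l, b⟩ ⟨hk, hl, -⟩ ⟨k', l', b'⟩ ⟨hk', hl', -⟩ hfeq
    obtain rfl : k = k' := by rw [← (hf k hk l hl b).2.1, hfeq, (hf k' hk' l' hl' b').2.1]
    obtain rfl : l = l' := by rw [← (hf k hk l hl b).2.2, hfeq, (hf k hk' l' hl' b').2.2]
    cases b <;> cases b'
    exacts [rfl, absurd hfeq.symm (hxy k l hk hl), absurd hfeq (hxy k l hk hl), rfl]
  calc 2 * K.encard * L.encard = (K ×ˢ L ×ˢ (Set.univ : Set Bool)).encard := by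
        simp only [Set.encard_prod, Set.encard_univ, ENat.card_eq_coe_fintype_card,
          Fintype.card_bool, Nat.cast_ofNat]
        ring
    _ ≤ (P.cross K L).encard := Set.encard_le_encard_of_injOn
        (fun ⟨k, l, b⟩ ⟨hk, hl, _⟩ => by
          obtain ⟨hs, hk', hl'⟩ := hf k hk l hl b
          exact ⟨hs, by rwa [hk'], by rwa [hl']⟩) hinj

theorem encard_cross_le {K L : Set ι} (hKL : Disjoint K L) {t : Set V}
    (hcut : ∀ x ∈ P.cross K L, x ∈ t ∨ P.partner x ∈ t) :
    (P.cross K L).encard ≤ t.encard := by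
  classical
  refine Set.encard_le_encard_of_injOn (f := fun x => if x ∈ t then x else P.partner x)
    (fun x hx => ?_) (fun x hx y hy hxy => ?_)
  · dsimp only
    split_ifs with hxt
    exacts [hxt, (hcut x hx).resolve_left hxt]
  · have hne : ∀ x ∈ P.cross K L, ∀ y ∈ P.cross K L, x ≠ P.partner y := by
      rintro x ⟨-, hxK, -⟩ y ⟨-, -, hyL⟩ rfl
      exact hKL.ne_of_mem hxK hyL rfl
    by_cases hxt : x ∈ t <;> by_cases hyt : y ∈ t <;>
      simp only [hxt, hyt, if_true, if_false] at hxy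
    · exact hxy
    · exact absurd hxy (hne x hx y hy)
    · exact absurd hxy.symm (hne y hy x hx)
    · rw [← P.partner_partner x hx.1, hxy, P.partner_partner y hy.1]

theorem block_diff_subset_or_disjoint {m : ℕ} {k : ι} {t X : Set V}
    (hk : G.IsVertexConnectedOn m (P.block k)) (hkt : (t ∩ P.block k).encard < m)
    (hX : ∀ x ∈ X, ∀ y ∈ (s \ t) \ X, ¬ G.Adj x y) :
    P.block k \ t ⊆ X ∨ Disjoint (P.block k \ t) X := by
  have hpre := hk hkt
  rw [Set.sdiff_inter_self_eq_sdiff] at hpre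
  rcases ((P.block k \ t) ∩ X).eq_empty_or_nonempty with h | h
  · exact Or.inr (Set.disjoint_iff_inter_eq_empty.mpr h)
  · exact Or.inl (subset_of_induce_preconnected hpre
      (Set.sdiff_subset_sdiff_left fun _ hx => hx.1) hX h)

theorem exists_mem_encard_inter_block_lt {m : ℕ} (hm : m ≠ 0) {t X : Set V}
    (ht : t.encard ≤ m) (hXs : X ⊆ s \ t) (hX : ∀ x ∈ X, ∀ y ∈ (s \ t) \ X, ¬ G.Adj x y)
    (hne : X.Nonempty) : ∃ x ∈ X, (t ∩ P.block (P.label x)).encard < m := by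
  obtain ⟨x, hx⟩ := hne
  by_cases hgood : (t ∩ P.block (P.label x)).encard < m
  · exact ⟨x, hx, hgood⟩
  have hxs := (hXs hx).1
  have htx : t ⊆ P.block (P.label x) := by
    have := (t.finite_of_encard_le_coe ht).eq_of_subset_of_encard_le' Set.inter_subset_left
      (ht.trans (not_lt.mp hgood))
    exact this ▸ Set.inter_subset_right
  have hpt : P.partner x ∉ t := fun h => P.label_partner_ne x hxs (htx h).2
  refine ⟨P.partner x, by_contra fun h => hX x hx _ ⟨⟨P.partner_mem x hxs, hpt⟩, h⟩
    (P.adj_partner x hxs), ?_⟩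
  have hempty : t ∩ P.block (P.label (P.partner x)) = ∅ := Set.eq_empty_of_forall_notMem
    fun y hy => P.label_partner_ne x hxs (hy.2.2.symm.trans (htx hy.1).2)
  rw [hempty, Set.encard_empty]
  exact_mod_cast Nat.pos_of_ne_zero hm

theorem subsingleton_setOf_le_encard_inter_block {m : ℕ} (hm : m ≠ 0) {t : Set V}
    (ht : t.encard ≤ m) : {k | (m : ℕ∞) ≤ (t ∩ P.block k).encard}.Subsingleton := by
  intro k hk l hl
  by_contra hkl
  have hdisj : Disjoint (t ∩ P.block k) (t ∩ P.block l) :=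
    Set.disjoint_left.mpr fun x hx hx' => hkl (hx.2.2.symm.trans hx'.2.2)
  have hsub : t ∩ P.block k ∪ t ∩ P.block l ⊆ t :=
    Set.union_subset Set.inter_subset_left Set.inter_subset_left
  have := (add_le_add hk hl).trans
    ((Set.encard_union_eq hdisj).symm.le.trans ((Set.encard_le_encard hsub).trans ht))
  norm_cast at this
  omega

theorem le_encard_lightLabels {m : ℕ} (hm : m ≠ 0) {t : Set V} (ht : t.encard ≤ m)
    (hlabels : m < (P.label '' s).encard) : (m : ℕ∞) ≤ (P.lightLabels t m).encard := by
  have hcover : P.label '' s ⊆ P.lightLabels t m ∪ {k | (m : ℕ∞) ≤ (t ∩ P.block k).encard} :=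
    fun k hk => (lt_or_ge _ _).imp (⟨hk, ·⟩) id
  have := hlabels.trans_le ((Set.encard_le_encard hcover).trans (Set.encard_union_le _ _))
  rw [← ENat.lt_add_one_iff' (ENat.natCast_ne_top m)]
  exact this.trans_le (add_le_add_right
    (Set.encard_le_one_iff_subsingleton.mpr (P.subsingleton_setOf_le_encard_inter_block hm ht)) _)

theorem exists_mem_lightLabels_sdiff_subset {m : ℕ} (hm : m ≠ 0)
    (hblock : ∀ k ∈ P.label '' s, G.IsVertexConnectedOn m (P.block k)) {t X : Set V}
    (ht : t.encard ≤ m) (hXs : X ⊆ s \ t) (hX : ∀ x ∈ X, ∀ y ∈ (s \ t) \ X, ¬ G.Adj x y)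
    (hne : X.Nonempty) :
    ∃ k ∈ P.lightLabels t m, (P.block k \ t).Nonempty ∧ P.block k \ t ⊆ X := by
  obtain ⟨x, hx, hlight⟩ := P.exists_mem_encard_inter_block_lt hm ht hXs hX hne
  have hxs : x ∈ s := (hXs hx).1
  have hxk : x ∈ P.block (P.label x) \ t := ⟨⟨hxs, rfl⟩, (hXs hx).2⟩
  refine ⟨P.label x, ⟨⟨x, hxs, rfl⟩, hlight⟩, ⟨x, hxk⟩, ?_⟩
  exact (P.block_diff_subset_or_disjoint (hblock _ ⟨x, hxs, rfl⟩) hlight hX).resolve_right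
    (Set.not_disjoint_iff.mpr ⟨x, hxk, hx⟩)

theorem two_mul_encard_mul_le_encard_of_cut {K L : Set ι} (hK : K ⊆ P.label '' s)
    (hL : L ⊆ P.label '' s) (hKL : Disjoint K L) {t X : Set V}
    (hKX : ∀ k ∈ K, P.block k \ t ⊆ X) (hLX : ∀ l ∈ L, Disjoint (P.block l \ t) X)
    (hX : ∀ x ∈ X, ∀ y ∈ (s \ t) \ X, ¬ G.Adj x y) :
    2 * K.encard * L.encard ≤ t.encard := by
  refine (P.two_mul_encard_mul_le_encard_cross hK hL hKL).trans (P.encard_cross_le hKL ?_)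
  rintro x ⟨hxs, hxK, hxL⟩
  by_contra! h
  have hpx : P.partner x ∈ P.block (P.label (P.partner x)) \ t :=
    ⟨⟨P.partner_mem x hxs, rfl⟩, h.2⟩
  exact hX x (hKX _ hxK ⟨⟨hxs, rfl⟩, h.1⟩) (P.partner x)
    ⟨⟨hpx.1.1, h.2⟩, Set.disjoint_left.mp (hLX _ hxL) hpx⟩ (P.adj_partner x hxs)

/-- If deleting `t`, with `|t| ≤ m`, separated `X` from the rest of `s`, then at most one block
would lose `m` vertices, so at least `m` blocks are light; by `hblock`, what survives of a light
block lies on one side of the cut, giving `K` light blocks on the side of `X` and `L` on the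
other. Both sides are nonempty and every matching edge across the cut meets `t`, whence
`2 |K| |L| ≤ m` although `|K| + |L| ≥ m ≥ 3`. -/
theorem isVertexConnectedOn_succ {m : ℕ} (hm : 3 ≤ m) (hlabels : m < (P.label '' s).encard)
    (hblock : ∀ k ∈ P.label '' s, G.IsVertexConnectedOn m (P.block k)) :
    G.IsVertexConnectedOn (m + 1) s := by
  intro t ht
  replace ht : t.encard ≤ m := by
    rwa [Nat.cast_add, Nat.cast_one, ENat.lt_add_one_iff (ENat.natCast_ne_top m)] at ht
  have hm0 : m ≠ 0 := by omega
  refine induce_preconnected_of_exists_adj fun X hXs hX hY => ?_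
  by_contra! hcut
  have hcut' : ∀ y ∈ (s \ t) \ X, ∀ x ∈ (s \ t) \ ((s \ t) \ X), ¬ G.Adj y x := by
    rw [Set.sdiff_sdiff_cancel_left hXs]
    exact fun y hy x hx h => hcut x hx y hy h.symm
  set A := P.lightLabels t m
  set K := {k ∈ A | P.block k \ t ⊆ X}
  have hK : K.Nonempty := by
    obtain ⟨k, hk, -, hsub⟩ := P.exists_mem_lightLabels_sdiff_subset hm0 hblock ht hXs hcut hX
    exact ⟨k, hk, hsub⟩
  have hL : (A \ K).Nonempty := by
    obtain ⟨k, hk, ⟨y, hy⟩, hsub⟩ :=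
      P.exists_mem_lightLabels_sdiff_subset hm0 hblock ht Set.sdiff_subset hcut' hY
    exact ⟨k, hk, fun h => (hsub hy).2 (h.2 hy)⟩
  have hcross : 2 * K.encard * (A \ K).encard ≤ t.encard :=
    P.two_mul_encard_mul_le_encard_of_cut (fun k hk => hk.1.1) (fun k hk => hk.1.1)
      Set.disjoint_sdiff_right (fun k hk => hk.2) (fun k hk =>
        (P.block_diff_subset_or_disjoint (hblock k hk.1.1) hk.1.2 hcut).resolve_left
          fun h => hk.2 ⟨hk.1, h⟩) hcut
  have hA : (m : ℕ∞) ≤ K.encard + (A \ K).encard := by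
    rw [← Set.encard_union_eq Set.disjoint_sdiff_right,
      Set.union_sdiff_cancel (Set.sep_subset _ _)]
    exact P.le_encard_lightLabels hm0 ht hlabels
  exact (ENat.lt_two_mul_mul_of_le_add hm hK.encard_pos.ne' hL.encard_pos.ne' hA).not_ge
    (hcross.trans ht)

end MatchedPartition

end SimpleGraph

section Cayley

variable {Γ : Type*} [Group Γ] {Ω : Set Γ}

def cayleyMulLeft (Ω : Set Γ) (g : Γ) : cayley Ω ≃g cayley Ω where
  toEquiv := Equiv.mulLeft g
  map_rel_iff' := by simp [cayley, mul_assoc]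

theorem cayley_adj_mul_right {g s : Γ} (hs : s ∈ Ω) (hs1 : s ≠ 1) : (cayley Ω).Adj g (g * s) :=
  ⟨fun h => hs1 (by simpa using h), s, hs, Or.inr rfl⟩

theorem cayley_neighborSet_one (hinv : ∀ s ∈ Ω, s⁻¹ ∈ Ω) (h1 : 1 ∉ Ω) :
    (cayley Ω).neighborSet 1 = Ω := by
  ext w
  constructor
  · rintro ⟨-, s, hs, h | rfl⟩
    · rw [eq_inv_of_mul_eq_one_left h.symm]
      exact hinv s hs
    · simpa using hs
  · intro hw
    simpa using cayley_adj_mul_right (g := 1) hw (ne_of_mem_of_not_mem hw h1)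

end Cayley

namespace Godan

variable {n : ℕ}

/-- The generators of `Ω*` all have this form `(12)(3, j+1)`: in the 0-indexed positions used
here, `j = 2` gives `(12)`, `j = 1` gives `(123)` and `j = 0` gives `(132)`. -/
def gen (hn : 3 ≤ n) (j : Fin n) : Perm (Fin n) :=
  swap (Fin.castLE hn 0) (Fin.castLE hn 1) * swap (Fin.castLE hn 2) j

variable (hn : 3 ≤ n)

theorem gen_castLE_one : gen hn (Fin.castLE hn 1) = c123 n hn := by
  ext x
  simp only [gen, c123, Perm.mul_apply, swap_apply_def]
  split_ifs <;> simp_all [Fin.ext_iff]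

theorem gen_castLE_zero : gen hn (Fin.castLE hn 0) = (c123 n hn)⁻¹ := by
  have h02 : swap (Fin.castLE hn 0) (Fin.castLE hn 1) (Fin.castLE hn 2) = Fin.castLE hn 2 :=
    swap_apply_of_ne_of_ne (by simp [Fin.ext_iff]) (by simp [Fin.ext_iff])
  rw [← gen_castLE_one hn, gen, gen, mul_swap_eq_swap_mul, h02, swap_apply_left, mul_inv_rev,
    swap_inv, swap_inv]

theorem gen_castLE_two : gen hn (Fin.castLE hn 2) = swap (Fin.castLE hn 0) (Fin.castLE hn 1) := by
  simp [gen, swap_self, ← Perm.one_def]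

theorem gen_mul_self {j : Fin n} (hj : 2 ≤ (j : ℕ)) : gen hn j * gen hn j = 1 := by
  ext x
  simp only [gen, Perm.mul_apply, swap_apply_def, Perm.one_apply]
  split_ifs <;> simp_all [Fin.ext_iff] <;> omega

theorem godanGens_eq_range : godanGens n hn = Set.range (gen hn) := by
  ext g
  constructor
  · rintro (rfl | (rfl | rfl) | ⟨i, hi4, hin, rfl⟩)
    · exact ⟨_, gen_castLE_two hn⟩
    · exact ⟨_, gen_castLE_one hn⟩
    · exact ⟨_, gen_castLE_zero hn⟩
    · exact ⟨⟨i - 1, by omega⟩, rfl⟩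
  · rintro ⟨j, rfl⟩
    obtain hj | hj | hj | hj : (j : ℕ) = 0 ∨ (j : ℕ) = 1 ∨ (j : ℕ) = 2 ∨ 3 ≤ (j : ℕ) := by omega
    · obtain rfl : j = Fin.castLE hn 0 := Fin.ext hj
      exact Or.inr (Or.inl (Or.inr (gen_castLE_zero hn)))
    · obtain rfl : j = Fin.castLE hn 1 := Fin.ext hj
      exact Or.inr (Or.inl (Or.inl (gen_castLE_one hn)))
    · obtain rfl : j = Fin.castLE hn 2 := Fin.ext hj
      exact Or.inl (gen_castLE_two hn)
    · exact Or.inr (Or.inr ⟨j + 1, by omega, by omega, by simp [gen]; rfl⟩)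

theorem gen_apply_self (j : Fin n) : gen hn j j = Fin.castLE hn 2 := by
  rw [gen, Perm.mul_apply, swap_apply_right]
  exact swap_apply_of_ne_of_ne (by simp [Fin.ext_iff]) (by simp [Fin.ext_iff])

theorem gen_apply_castLE_one_ne (j : Fin n) : gen hn j (Fin.castLE hn 1) ≠ Fin.castLE hn 1 := by
  simp only [gen, Perm.mul_apply, swap_apply_def]
  split_ifs <;> simp_all [Fin.ext_iff]

theorem gen_ne_one (j : Fin n) : gen hn j ≠ 1 :=
  fun h => gen_apply_castLE_one_ne hn j (by rw [h, Perm.one_apply])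

theorem gen_injective : Function.Injective (gen hn) := fun j k h => by
  simpa using congrArg (· (Fin.castLE hn 2)) (mul_left_cancel h)

theorem inv_mem_godanGens {g : Perm (Fin n)} (hg : g ∈ godanGens n hn) : g⁻¹ ∈ godanGens n hn := by
  rw [godanGens_eq_range] at hg ⊢
  obtain ⟨j, rfl⟩ := hg
  obtain hj | hj | hj : (j : ℕ) = 0 ∨ (j : ℕ) = 1 ∨ 2 ≤ (j : ℕ) := by omega
  · obtain rfl : j = Fin.castLE hn 0 := Fin.ext hj
    exact ⟨Fin.castLE hn 1, by rw [gen_castLE_zero, gen_castLE_one, inv_inv]⟩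
  · obtain rfl : j = Fin.castLE hn 1 := Fin.ext hj
    exact ⟨Fin.castLE hn 0, by rw [gen_castLE_zero, gen_castLE_one]⟩
  · exact ⟨j, (inv_eq_of_mul_eq_one_right (gen_mul_self hn hj)).symm⟩

theorem gen_mem_godanGens (j : Fin n) : gen hn j ∈ godanGens n hn := by
  rw [godanGens_eq_range]
  exact ⟨j, rfl⟩

theorem one_notMem_godanGens : 1 ∉ godanGens n hn := by
  rw [godanGens_eq_range]
  exact fun ⟨j, hj⟩ => gen_ne_one hn j hj

theorem sign_gen {j : Fin n} (hj : (j : ℕ) ≠ 2) : Perm.sign (gen hn j) = 1 := by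
  rw [gen, map_mul, Perm.sign_swap (by simp [Fin.ext_iff]),
    Perm.sign_swap (by simpa [Fin.ext_iff] using hj.symm)]
  decide

theorem sign_gen_castLE_two : Perm.sign (gen hn (Fin.castLE hn 2)) = -1 := by
  rw [gen_castLE_two, Perm.sign_swap (by simp [Fin.ext_iff])]

theorem gen_castLE_one_apply_castLE_zero :
    gen hn (Fin.castLE hn 1) (Fin.castLE hn 0) = Fin.castLE hn 1 := by
  simp [gen, swap_apply_def, Fin.ext_iff]

theorem gen_castLE_zero_apply_castLE_zero :
    gen hn (Fin.castLE hn 0) (Fin.castLE hn 0) = Fin.castLE hn 2 := by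
  simp [gen, swap_apply_def, Fin.ext_iff]

theorem mul_gen_apply_self (x : Perm (Fin n)) (j : Fin n) :
    (x * gen hn j) j = x (Fin.castLE hn 2) := by
  rw [Perm.mul_apply, gen_apply_self]

theorem neighborSet_one_godan : (godan n hn).neighborSet 1 = Set.range (gen hn) := by
  rw [godan, cayley_neighborSet_one (fun _ => inv_mem_godanGens hn) (one_notMem_godanGens hn),
    godanGens_eq_range]

theorem not_adj_one_swap :
    ¬ (godan n hn).Adj 1 (swap (Fin.castLE hn 0) (Fin.castLE hn 2)) := by
  rw [← mem_neighborSet, neighborSet_one_godan]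
  rintro ⟨j, hj⟩
  refine gen_apply_castLE_one_ne hn j ?_
  rw [hj]
  exact swap_apply_of_ne_of_ne (by simp [Fin.ext_iff]) (by simp [Fin.ext_iff])

theorem vconn_godan_le : vconn (godan n hn) ≤ n := by
  have hne : swap (Fin.castLE hn 0) (Fin.castLE hn 2) ≠ 1 := by
    simp [swap_eq_one_iff, Fin.ext_iff]
  calc vconn (godan n hn) ≤ ((godan n hn).neighborSet 1).ncard :=
        vconn_le_ncard (Set.toFinite _)
          (Or.inl (not_connected_induce_compl_neighborSet hne (not_adj_one_swap hn)))
    _ = n := by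
        rw [neighborSet_one_godan, Set.ncard_range_of_injective (gen_injective hn),
          Nat.card_eq_fintype_card, Fintype.card_fin]

def fixAbove (n m : ℕ) : Subgroup (Perm (Fin n)) :=
  fixingSubgroup (Perm (Fin n)) {j : Fin n | m ≤ (j : ℕ)}

theorem mem_fixAbove {m : ℕ} {x : Perm (Fin n)} :
    x ∈ fixAbove n m ↔ ∀ j : Fin n, m ≤ (j : ℕ) → x j = j := by
  simp [fixAbove, mem_fixingSubgroup_iff, Perm.smul_def]

theorem fixAbove_self : fixAbove n n = ⊤ :=
  eq_top_iff.mpr fun _ _ => mem_fixAbove.mpr fun j hj => absurd j.isLt (by omega)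

theorem swap_mem_fixAbove {m : ℕ} {a b : Fin n} (ha : (a : ℕ) < m) (hb : (b : ℕ) < m) :
    swap a b ∈ fixAbove n m :=
  mem_fixAbove.mpr fun _ hj => swap_apply_of_ne_of_ne (by rintro rfl; omega) (by rintro rfl; omega)

theorem apply_lt_of_mem_fixAbove {m : ℕ} {x : Perm (Fin n)} (hx : x ∈ fixAbove n m) {j : Fin n}
    (hj : (j : ℕ) < m) : (x j : ℕ) < m := by
  by_contra! h
  have := x.injective (mem_fixAbove.mp hx (x j) h)
  omega

theorem gen_mem_fixAbove {m : ℕ} (hm : 3 ≤ m) {j : Fin n} (hj : (j : ℕ) < m) :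
    gen hn j ∈ fixAbove n m :=
  mul_mem (swap_mem_fixAbove (by simp; omega) (by simp; omega))
    (swap_mem_fixAbove (by simp; omega) hj)

theorem eq_one_of_mem_fixAbove_three {z : Perm (Fin n)} (hz : z ∈ fixAbove n 3)
    (h0 : z (Fin.castLE hn 0) = Fin.castLE hn 0) (hsign : Perm.sign z = 1) : z = 1 := by
  have hsupp : z.support ⊆ {Fin.castLE hn 1, Fin.castLE hn 2} := by
    intro j hj
    rw [Perm.mem_support] at hj
    simp only [Finset.mem_insert, Finset.mem_singleton, Fin.ext_iff, Fin.val_castLE]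
    obtain h | h | h | h : (j : ℕ) = 0 ∨ (j : ℕ) = 1 ∨ (j : ℕ) = 2 ∨ 3 ≤ (j : ℕ) := by omega
    · obtain rfl : j = Fin.castLE hn 0 := Fin.ext h
      exact absurd h0 hj
    · exact Or.inl h
    · exact Or.inr h
    · exact absurd (mem_fixAbove.mp hz j h) hj
  have hcard : z.support.card ≤ 2 := (Finset.card_le_card hsupp).trans Finset.card_le_two
  have hcard2 : z.support.card ≠ 2 := fun h => by
    rw [(Perm.card_support_eq_two.mp h).sign_eq] at hsign
    exact absurd hsign (by decide)
  have := Perm.card_support_ne_one z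
  exact Perm.card_support_eq_zero.mp (by omega)

theorem eq_of_mem_fixAbove_three {x y : Perm (Fin n)} (hx : x ∈ fixAbove n 3)
    (hy : y ∈ fixAbove n 3) (h0 : x (Fin.castLE hn 0) = y (Fin.castLE hn 0))
    (hsign : Perm.sign x = Perm.sign y) : x = y :=
  (inv_mul_eq_one.mp (eq_one_of_mem_fixAbove_three hn (mul_mem (inv_mem hy) hx)
    (by rw [Perm.mul_apply, h0, Perm.inv_eq_iff_eq]) (by simp [hsign]))).symm

theorem eq_one_or_mem_godanGens_of_sign_eq_one {x : Perm (Fin n)} (hx : x ∈ fixAbove n 3)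
    (hsign : Perm.sign x = 1) : x = 1 ∨ x ∈ godanGens n hn := by
  have hlt := apply_lt_of_mem_fixAbove hx (j := Fin.castLE hn 0) (by simp)
  obtain h | h | h : (x (Fin.castLE hn 0) : ℕ) = 0 ∨ (x (Fin.castLE hn 0) : ℕ) = 1 ∨
      (x (Fin.castLE hn 0) : ℕ) = 2 := by omega
  · exact Or.inl (eq_of_mem_fixAbove_three hn hx (one_mem _) (Fin.ext h) (by rw [hsign, map_one]))
  · refine Or.inr (eq_of_mem_fixAbove_three hn hx
      (gen_mem_fixAbove hn le_rfl (j := Fin.castLE hn 1) (by simp)) ?_ ?_ ▸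
      gen_mem_godanGens hn (Fin.castLE hn 1))
    · rw [gen_castLE_one_apply_castLE_zero]
      exact Fin.ext h
    · rw [hsign, sign_gen hn (by simp)]
  · refine Or.inr (eq_of_mem_fixAbove_three hn hx
      (gen_mem_fixAbove hn le_rfl (j := Fin.castLE hn 0) (by simp)) ?_ ?_ ▸
      gen_mem_godanGens hn (Fin.castLE hn 0))
    · rw [gen_castLE_zero_apply_castLE_zero]
      exact Fin.ext h
    · rw [hsign, sign_gen hn (by simp)]

theorem reachable_of_sign_eq_one {t : Set (Perm (Fin n))} {u v : Perm (Fin n)}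
    (hu : u ∈ (fixAbove n 3 : Set (Perm (Fin n))) \ t)
    (hv : v ∈ (fixAbove n 3 : Set (Perm (Fin n))) \ t) (hsign : Perm.sign (u⁻¹ * v) = 1) :
    ((godan n hn).induce ((fixAbove n 3 : Set (Perm (Fin n))) \ t)).Reachable ⟨u, hu⟩ ⟨v, hv⟩ := by
  rcases eq_one_or_mem_godanGens_of_sign_eq_one hn (mul_mem (inv_mem hu.1) hv.1) hsign with h | h
  · obtain rfl : u = v := inv_mul_eq_one.mp h
    rfl
  · have hadj := cayley_adj_mul_right (g := u) h (ne_of_mem_of_not_mem h (one_notMem_godanGens hn))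
    rw [mul_inv_cancel_left] at hadj
    exact Adj.reachable (G := (godan n hn).induce _) (u := ⟨u, hu⟩) (v := ⟨v, hv⟩) hadj

/-- The three pairs `{u b, u b (12)}` with `b` even are disjoint, so one of them avoids `t`. -/
theorem exists_mul_notMem_and_mul_mul_notMem (u : Perm (Fin n)) {t : Set (Perm (Fin n))}
    (ht : t.encard < 3) : ∃ b ∈ fixAbove n 3, Perm.sign b = 1 ∧
      u * b ∉ t ∧ u * b * gen hn (Fin.castLE hn 2) ∉ t := by
  classical
  set B : Set (Perm (Fin n)) := {1, gen hn (Fin.castLE hn 1), gen hn (Fin.castLE hn 0)}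
  set T := gen hn (Fin.castLE hn 2)
  have hB : ∀ b ∈ B, b ∈ fixAbove n 3 ∧ Perm.sign b = 1 := by
    rintro b (rfl | rfl | rfl)
    · exact ⟨one_mem _, map_one _⟩
    all_goals exact ⟨gen_mem_fixAbove hn le_rfl (by simp), sign_gen hn (by simp)⟩
  by_contra! h
  have hmaps : Set.MapsTo (fun b => if u * b ∈ t then u * b else u * b * T) B t := fun b hb => by
    dsimp only
    split_ifs with hbt
    exacts [hbt, h b (hB b hb).1 (hB b hb).2 hbt]
  have hcard : B.encard = 3 := by
    refine Set.encard_eq_three.mpr ⟨_, _, _, ?_, ?_, ?_, rfl⟩ <;> intro heq <;>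
      have := congrArg (· (Fin.castLE hn 0)) heq <;>
      simp [gen_castLE_one_apply_castLE_zero, gen_castLE_zero_apply_castLE_zero, Fin.ext_iff]
        at this
  have hodd : ∀ b ∈ B, ∀ b' ∈ B, b ≠ b' * T := fun b hb b' hb' heq => by
    have := congrArg Perm.sign heq
    rw [map_mul, (hB b hb).2, (hB b' hb').2, sign_gen_castLE_two] at this
    exact absurd this (by decide)
  obtain ⟨b, hb, b', hb', hne, hfeq⟩ :=
    Set.exists_ne_map_eq_of_encard_lt_of_maps_to (hcard ▸ ht) hmaps
  split_ifs at hfeq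
  · exact hne (mul_left_cancel hfeq)
  · exact hodd b hb b' hb' (mul_left_cancel (hfeq.trans (mul_assoc _ _ _)))
  · exact hodd b' hb' b hb (mul_left_cancel (hfeq.symm.trans (mul_assoc _ _ _)))
  · exact hne (mul_left_cancel (mul_right_cancel hfeq))

theorem isVertexConnectedOn_fixAbove_three :
    (godan n hn).IsVertexConnectedOn 3 (fixAbove n 3) := by
  rintro t ht ⟨u, hu⟩ ⟨v, hv⟩
  rcases Int.units_eq_one_or (Perm.sign (u⁻¹ * v)) with hs | hs
  · exact reachable_of_sign_eq_one hn hu hv hs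
  obtain ⟨b, hb, hbsign, hbt, hbTt⟩ := exists_mul_notMem_and_mul_mul_notMem hn u ht
  set T := gen hn (Fin.castLE hn 2)
  have hub : u * b ∈ (fixAbove n 3 : Set (Perm (Fin n))) \ t := ⟨mul_mem hu.1 hb, hbt⟩
  have hubT : u * b * T ∈ (fixAbove n 3 : Set (Perm (Fin n))) \ t :=
    ⟨mul_mem hub.1 (gen_mem_fixAbove hn le_rfl (by simp)), hbTt⟩
  have hadj : (godan n hn).Adj (u * b) (u * b * T) :=
    cayley_adj_mul_right (gen_mem_godanGens hn _) (gen_ne_one hn _)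
  refine (reachable_of_sign_eq_one hn hu hub (by rwa [inv_mul_cancel_left])).trans
    ((Adj.reachable (G := (godan n hn).induce _) (u := ⟨_, hub⟩) (v := ⟨_, hubT⟩) hadj).trans
      (reachable_of_sign_eq_one hn hubT hv ?_))
  rw [show (u * b * T)⁻¹ * v = T⁻¹ * b⁻¹ * (u⁻¹ * v) by group, map_mul, map_mul, map_inv,
    map_inv, sign_gen_castLE_two, hbsign, hs]
  decide

theorem image_apply_fixAbove_succ {m : ℕ} (hmn : m < n) :
    (fun x : Perm (Fin n) => x ⟨m, hmn⟩) '' fixAbove n (m + 1) = Set.Iic ⟨m, hmn⟩ := by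
  ext k
  rw [Set.mem_Iic, Fin.le_def]
  change _ ↔ (k : ℕ) ≤ m
  constructor
  · rintro ⟨x, hx, rfl⟩
    exact Nat.lt_succ_iff.mp (apply_lt_of_mem_fixAbove hx (by simp))
  · intro hk
    exact ⟨swap k ⟨m, hmn⟩, swap_mem_fixAbove (m := m + 1) (by omega) (by simp),
      swap_apply_right _ _⟩

theorem nontrivial_setOf_apply_eq {m : ℕ} (hm : 3 ≤ m) (hmn : m < n) {k l : Fin n}
    (hk : (k : ℕ) ≤ m) (hl : (l : ℕ) ≤ m) (hkl : k ≠ l) :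
    {w ∈ fixAbove n (m + 1) | w ⟨m, hmn⟩ = k ∧ (w * gen hn ⟨m, hmn⟩) ⟨m, hmn⟩ = l}.Nontrivial := by
  simp only [mul_gen_apply_self]
  set x := swap k ⟨m, hmn⟩
  have hx : x ∈ fixAbove n (m + 1) := swap_mem_fixAbove (by omega) (by simp)
  set w := swap l (x (Fin.castLE hn 2)) * x
  have hw : w ∈ fixAbove n (m + 1) :=
    mul_mem (swap_mem_fixAbove (by omega) (apply_lt_of_mem_fixAbove hx (by simp; omega))) hx
  have hwm : w ⟨m, hmn⟩ = k := by
    rw [Perm.mul_apply, swap_apply_right]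
    refine swap_apply_of_ne_of_ne hkl fun h => ?_
    have := x.injective ((swap_apply_right k ⟨m, hmn⟩).trans h)
    simp [Fin.ext_iff] at this
    omega
  have hw2 : w (Fin.castLE hn 2) = l := swap_apply_right _ _
  have hT : ∀ j : Fin n, 2 ≤ (j : ℕ) → gen hn (Fin.castLE hn 2) j = j := fun j hj => by
    rw [gen_castLE_two]
    exact swap_apply_of_ne_of_ne (by simp [Fin.ext_iff]; omega) (by simp [Fin.ext_iff]; omega)
  refine ⟨w, ⟨hw, hwm, hw2⟩, w * gen hn (Fin.castLE hn 2), ⟨?_, ?_, ?_⟩, ?_⟩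
  · exact mul_mem hw (gen_mem_fixAbove hn (by omega) (by simp; omega))
  · rw [Perm.mul_apply, hT _ (by simp; omega), hwm]
  · rw [Perm.mul_apply, hT _ (by simp), hw2]
  · exact fun h => gen_ne_one hn _ (left_eq_mul.mp h)

theorem setOf_apply_eq_eq_image_mul_left {m : ℕ} (hmn : m < n) {x : Perm (Fin n)}
    (hx : x ∈ fixAbove n (m + 1)) :
    {y ∈ fixAbove n (m + 1) | y ⟨m, hmn⟩ = x ⟨m, hmn⟩} = (x * ·) '' fixAbove n m := by
  ext y
  simp only [Set.image_mul_left, Set.mem_preimage, SetLike.mem_coe, mem_fixAbove,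
    Perm.mul_apply, Perm.inv_eq_iff_eq]
  have hx' := mem_fixAbove.mp hx
  constructor
  · rintro ⟨hy, hym⟩ j hj
    rcases hj.eq_or_lt with h | h
    · rwa [show j = ⟨m, hmn⟩ from Fin.ext h.symm]
    · rw [hy j h, hx' j h]
  · intro h
    exact ⟨fun j hj => (h j (by omega)).trans (hx' j hj), h _ le_rfl⟩

def fixAboveMatchedPartition {m : ℕ} (hm : 3 ≤ m) (hmn : m < n) :
    (godan n hn).MatchedPartition (fixAbove n (m + 1)) (Fin n) where
  label x := x ⟨m, hmn⟩
  partner x := x * gen hn ⟨m, hmn⟩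
  partner_mem _ hx := mul_mem hx (gen_mem_fixAbove hn (by omega) (by simp))
  partner_partner _ _ := by rw [mul_assoc, gen_mul_self hn (by simp; omega), mul_one]
  adj_partner _ _ := cayley_adj_mul_right (gen_mem_godanGens hn _) (gen_ne_one hn _)
  label_partner_ne x _ := by
    rw [mul_gen_apply_self]
    exact x.injective.ne (by simp [Fin.ext_iff]; omega)
  nontrivial_cross := by
    rintro k hk l hl hkl
    rw [image_apply_fixAbove_succ, Set.mem_Iic, Fin.le_def] at hk hl
    exact nontrivial_setOf_apply_eq hn hm hmn hk hl hkl

theorem isVertexConnectedOn_fixAbove_succ {m : ℕ} (hm : 3 ≤ m) (hmn : m < n)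
    (ih : (godan n hn).IsVertexConnectedOn m (fixAbove n m)) :
    (godan n hn).IsVertexConnectedOn (m + 1) (fixAbove n (m + 1)) := by
  let P := fixAboveMatchedPartition hn hm hmn
  refine P.isVertexConnectedOn_succ hm ?_ ?_
  · rw [show P.label '' _ = _ from image_apply_fixAbove_succ hmn, ← Finset.coe_Iic,
      Set.encard_coe_eq_coe_finsetCard, Fin.card_Iic]
    exact_mod_cast Nat.lt_succ_self m
  · rintro _ ⟨x, hx, rfl⟩
    show (godan n hn).IsVertexConnectedOn m {y ∈ fixAbove n (m + 1) | y ⟨m, hmn⟩ = x ⟨m, hmn⟩}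
    rw [setOf_apply_eq_eq_image_mul_left hmn hx]
    exact ih.image (cayleyMulLeft (godanGens n hn) x)

theorem isVertexConnectedOn_univ : (godan n hn).IsVertexConnectedOn n Set.univ := by
  have key : ∀ m, 3 ≤ m → m ≤ n → (godan n hn).IsVertexConnectedOn m (fixAbove n m) := by
    intro m hm
    induction m, hm using Nat.le_induction with
    | base => exact fun _ => isVertexConnectedOn_fixAbove_three hn
    | succ m hm ih => exact fun hmn => isVertexConnectedOn_fixAbove_succ hn hm hmn (ih (by omega))
  simpa [fixAbove_self] using key n hn le_rfl

theorem le_vconn_godan : n ≤ vconn (godan n hn) :=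
  le_vconn (isVertexConnectedOn_univ hn) (by
    rw [Nat.card_perm, Nat.card_eq_fintype_card, Fintype.card_fin]
    exact Nat.lt_factorial_self hn)

end Godan

/-- For every integer `n ≥ 3`, `κ(EA_n) = n`. -/
theorem vconn_godan (n : ℕ) (hn : 3 ≤ n) :
    vconn (godan n hn) = n :=
  le_antisymm (Godan.vconn_godan_le hn) (Godan.le_vconn_godan hn)
end
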